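/- Let R be a ring in which 2 is invertible. Then a ∈ R has a Hirano inverse if and only if there exist idempotents e, f in the double commutant of a such that a + e - f is nilpotent. -/

import Mathlib

/-!
A Hirano inverse `b` makes `a b` idempotent, and this forces `a - a³` to be nilpotent. Since `2`
is a unit, `3 a² - 1` is then a unit too, so Newton's method for `X³ - X` yields a tripotent `x`
with `a - x` nilpotent, and `e = (x² - x) / 2`, `f = (x² + x) / 2` are idempotents with
`f - e = x`. Conversely, if `x = f - e` is tripotent and `a - x` nilpotent, then
`x (1 + (a - x) x)⁻¹` is a Hirano inverse of `a`. All of this takes place in `comm² a`, a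
commutative ring containing `a` and `1 / 2`, so the idempotents land in the double commutant.
-/

def IsHiranoInverse {R : Type*} [Ring R] (a b : R) : Prop :=
  IsNilpotent (a ^ 2 - a * b) ∧ a * b = b * a ∧ b = b * a * b

open Function Polynomial

theorem IsHiranoInverse.map_iff {R S F : Type*} [Ring R] [Ring S] [FunLike F R S]
    [RingHomClass F R S] {f : F} (hf : Injective f) {a b : R} :
    IsHiranoInverse (f a) (f b) ↔ IsHiranoInverse a b := by
  simp only [IsHiranoInverse, ← map_pow, ← map_mul, ← map_sub, IsNilpotent.map_iff hf,
    hf.eq_iff]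

section CommRing

variable {A : Type*} [CommRing A]

theorem IsHiranoInverse.isNilpotent_sub_pow_three_of_commRing {a b : A}
    (h : IsHiranoInverse a b) : IsNilpotent (a - a ^ 3) := by
  obtain ⟨hn, -, hbab⟩ := h
  have hsq : (a * (1 - a * b)) ^ 2 = (a ^ 2 - a * b) * (1 - a * b) := by
    linear_combination (1 - a ^ 2) * a * hbab
  have hnil : IsNilpotent (a * (1 - a * b)) :=
    IsNilpotent.of_pow (m := 2) (hsq ▸ (Commute.all _ _).isNilpotent_mul_right hn)
  rw [show a - a ^ 3 = a * (1 - a * b) - a * (a ^ 2 - a * b) by ring]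
  exact (Commute.all _ _).isNilpotent_sub hnil ((Commute.all _ _).isNilpotent_mul_left hn)

theorem isUnit_three_mul_sq_sub_one (h2 : IsUnit (2 : A)) {a : A}
    (ha : IsNilpotent (a - a ^ 3)) : IsUnit (3 * a ^ 2 - 1) := by
  obtain ⟨u, hu⟩ := h2.exists_right_inv
  -- modulo nilpotents `a²` is an idempotent `ε`, and `(3ε - 1)((u + 1)ε - 1) = 1`
  have key : (3 * a ^ 2 - 1) * ((u + 1) * a ^ 2 - 1) = 1 - (3 * u + 3) * a * (a - a ^ 3) := by
    linear_combination a ^ 2 * hu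
  have hunit : IsUnit (1 - (3 * u + 3) * a * (a - a ^ 3)) :=
    ((Commute.all _ _).isNilpotent_mul_left ha).isUnit_one_sub
  exact isUnit_of_mul_isUnit_left (key ▸ hunit)

theorem exists_pow_three_eq_self_isNilpotent_sub (h2 : IsUnit (2 : A)) {a : A}
    (ha : IsNilpotent (a - a ^ 3)) : ∃ x : A, x ^ 3 = x ∧ IsNilpotent (a - x) := by
  have hP : IsNilpotent (aeval a (X ^ 3 - X : ℤ[X])) := by
    rw [← neg_sub, isNilpotent_neg_iff] at ha
    simpa only [map_sub, map_pow, aeval_X] using ha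
  have hP' : IsUnit (aeval a (derivative (X ^ 3 - X : ℤ[X]))) := by
    simpa [map_ofNat] using isUnit_three_mul_sq_sub_one h2 ha
  obtain ⟨x, ⟨hax, hx⟩, -⟩ := existsUnique_nilpotent_sub_and_aeval_eq_zero hP hP'
  exact ⟨x, by simpa [sub_eq_zero] using hx, hax⟩

theorem exists_isIdempotentElem_sub_eq_of_pow_three_eq_self (h2 : IsUnit (2 : A)) {x : A}
    (hx : x ^ 3 = x) : ∃ e f : A, IsIdempotentElem e ∧ IsIdempotentElem f ∧ f - e = x := by
  obtain ⟨v, hv⟩ := h2.exists_right_inv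
  refine ⟨v * (x ^ 2 - x), v * (x ^ 2 + x), ?_, ?_, ?_⟩
  · unfold IsIdempotentElem
    linear_combination (v ^ 2 * (x - 2)) * hx + (v * (x ^ 2 - x)) * hv
  · unfold IsIdempotentElem
    linear_combination (v ^ 2 * (x + 2)) * hx + (v * (x ^ 2 + x)) * hv
  · linear_combination x * hv

theorem exists_isIdempotentElem_isNilpotent_add_sub (h2 : IsUnit (2 : A)) {a : A}
    (ha : IsNilpotent (a - a ^ 3)) :
    ∃ e f : A, IsIdempotentElem e ∧ IsIdempotentElem f ∧ IsNilpotent (a + e - f) := by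
  obtain ⟨x, hx, hax⟩ := exists_pow_three_eq_self_isNilpotent_sub h2 ha
  obtain ⟨e, f, he, hf, rfl⟩ := exists_isIdempotentElem_sub_eq_of_pow_three_eq_self h2 hx
  exact ⟨e, f, he, hf, sub_sub_eq_add_sub a f e ▸ hax⟩

theorem IsIdempotentElem.sub_pow_three {e f : A} (he : IsIdempotentElem e)
    (hf : IsIdempotentElem f) : (f - e) ^ 3 = f - e := by
  unfold IsIdempotentElem at he hf
  linear_combination (3 * f - e - 1) * he + (f + 1 - 3 * e) * hf

theorem exists_isHiranoInverse_of_pow_three_eq_self {a x : A} (hx : x ^ 3 = x)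
    (hax : IsNilpotent (a - x)) : ∃ b, IsHiranoInverse a b := by
  obtain ⟨c, hc⟩ :=
    ((Commute.all _ x).isNilpotent_mul_right hax).isUnit_one_add.exists_right_inv
  have hab : a * (x * c) = x ^ 2 := by
    linear_combination x ^ 2 * hc + (x * c - a * c) * hx
  refine ⟨x * c, ?_, mul_comm _ _, ?_⟩
  · rw [hab, sq_sub_sq]
    exact (Commute.all _ _).isNilpotent_mul_left hax
  · linear_combination (-(x * c)) * hc - c ^ 2 * hx

theorem exists_isHiranoInverse_of_isNilpotent_add_sub {a e f : A} (he : IsIdempotentElem e)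
    (hf : IsIdempotentElem f) (hn : IsNilpotent (a + e - f)) : ∃ b, IsHiranoInverse a b :=
  exists_isHiranoInverse_of_pow_three_eq_self (he.sub_pow_three hf)
    (sub_sub_eq_add_sub a f e ▸ hn)

end CommRing

open scoped IsMulCommutative

theorem IsHiranoInverse.isNilpotent_sub_pow_three {R : Type*} [Ring R] {a b : R}
    (h : IsHiranoInverse a b) : IsNilpotent (a - a ^ 3) := by
  let S := Subring.closure {a, b}
  have : IsMulCommutative S := Subring.isMulCommutative_closure <| by
    rintro x (rfl | rfl) y (rfl | rfl) <;> first | rfl | exact h.2.1 | exact h.2.1.symm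
  have hS : IsHiranoInverse (⟨a, Subring.subset_closure (by simp)⟩ : S)
      ⟨b, Subring.subset_closure (by simp)⟩ :=
    (IsHiranoInverse.map_iff (f := S.subtype) Subtype.val_injective).1 h
  exact hS.isNilpotent_sub_pow_three_of_commRing.map S.subtype

section DoubleCommutant

variable {R : Type*} [Ring R] {a : R}

abbrev doubleCommutant (a : R) : Subring R :=
  Subring.centralizer (Set.centralizer {a})

theorem mem_doubleCommutant {r : R} :
    r ∈ doubleCommutant a ↔ ∀ y, a * y = y * a → r * y = y * r := by
  simp only [Subring.mem_centralizer_iff, Set.mem_centralizer_iff, Set.mem_singleton_iff,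
    forall_eq, eq_comm (a := _ * r)]

theorem self_mem_doubleCommutant (a : R) : a ∈ doubleCommutant a :=
  mem_doubleCommutant.2 fun _ hy => hy

instance (a : R) : IsMulCommutative (doubleCommutant a) :=
  .of_setLike_mul_comm fun _ hx _ hy =>
    Set.centralizer_centralizer_comm_of_comm (by simp) _ hx _ hy

theorem isUnit_two_doubleCommutant (h2 : IsUnit (2 : R)) : IsUnit (2 : doubleCommutant a) := by
  obtain ⟨u, hu⟩ := h2
  have hinv : (↑u⁻¹ : R) ∈ doubleCommutant a := mem_doubleCommutant.2 fun y _ =>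
    (show Commute (u : R) y from hu ▸ Commute.ofNat_left 2 y).units_inv_left
  refine IsUnit.of_mul_eq_one ⟨_, hinv⟩ (Subtype.ext ?_)
  change (2 : R) * ↑u⁻¹ = 1
  rw [← hu, Units.mul_inv]

end DoubleCommutant

theorem stmt8 {R : Type*} [Ring R] (h2 : IsUnit (2 : R)) (a : R) :
    (∃ b, IsHiranoInverse a b) ↔
    (∃ e f : R, (∀ y : R, a * y = y * a → e * y = y * e) ∧
      (∀ y : R, a * y = y * a → f * y = y * f) ∧
      e ^ 2 = e ∧ f ^ 2 = f ∧ IsNilpotent (a + e - f)) := by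
  set C := doubleCommutant a
  have hval : Injective C.subtype := Subtype.val_injective
  let a' : C := ⟨a, self_mem_doubleCommutant a⟩
  constructor
  · rintro ⟨b, hb⟩
    have ha' : IsNilpotent (a' - a' ^ 3) :=
      (IsNilpotent.map_iff hval).1 hb.isNilpotent_sub_pow_three
    obtain ⟨e, f, he, hf, hn⟩ :=
      exists_isIdempotentElem_isNilpotent_add_sub (isUnit_two_doubleCommutant h2) ha'
    exact ⟨e, f, mem_doubleCommutant.1 e.2, mem_doubleCommutant.1 f.2,
      (sq _).trans (he.map C.subtype).eq, (sq _).trans (hf.map C.subtype).eq, hn.map C.subtype⟩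
  · rintro ⟨e, f, he, hf, he2, hf2, hn⟩
    let e' : C := ⟨e, mem_doubleCommutant.2 he⟩
    let f' : C := ⟨f, mem_doubleCommutant.2 hf⟩
    obtain ⟨b, hb⟩ := exists_isHiranoInverse_of_isNilpotent_add_sub (a := a')
      (e := e') (f := f') (Subtype.ext ((sq e).symm.trans he2))
      (Subtype.ext ((sq f).symm.trans hf2)) ((IsNilpotent.map_iff hval).1 hn)
    exact ⟨b, (IsHiranoInverse.map_iff hval).2 hb⟩
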